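/- arXiv:2309.02718 — 6 statements merged into one kernel-verified Lean document; each statement's English description precedes it below -/
import Mathlib

section
/- Define e : List ℕ → List (Fin 2) by e([]) = [] and e(η ++ [i]) = e(η) ++ [0] ++ (replicate (2*i) 1), and define f(η) = e(η) ++ [1]. Let η be a list, i, j natural numbers with j ≤ i, and ν a list having η ++ [j] as a strict prefix. Then f(η ++ [i]) and f(ν) are incomparable in the prefix order (neither is a prefix of the other). -/
theorem stmt_3 (e : List ℕ → List (Fin 2))
    (he0 : e [] = [])
    (he : ∀ (η : List ℕ) (i : ℕ), e (η ++ [i]) = e η ++ [0] ++ List.replicate (2 * i) 1)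
    (f : List ℕ → List (Fin 2))
    (hf : ∀ η : List ℕ, f η = e η ++ [1])
    (η : List ℕ) (i j : ℕ) (hji : j ≤ i) (ν : List ℕ)
    (hpre : η ++ [j] <+: ν) (hne : η ++ [j] ≠ ν) :
    ¬ (f (η ++ [i]) <+: f ν) ∧ ¬ (f ν <+: f (η ++ [i])) := by
  -- key lemma: if σ ++ [a] <+: ρ then e σ ++ [0] <+: e ρ
  have key : ∀ (ρ σ : List ℕ) (a : ℕ), σ ++ [a] <+: ρ → e σ ++ [0] <+: e ρ := by
    intro ρ
    induction ρ using List.reverseRecOn with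
    | nil =>
      intro σ a h
      exact absurd (List.eq_nil_of_prefix_nil h) (by simp)
    | append_singleton μ k ih =>
      intro σ a h
      rcases List.prefix_concat_iff.mp h with h | h
      · have hσ : σ = μ := by
          have := congrArg (fun l => l.dropLast) h
          simpa using this
        subst hσ
        rw [he]
        exact ⟨List.replicate (2*k) 1, by simp⟩
      · have h1 := ih σ a h
        refine h1.trans ?_
        rw [he]
        exact ⟨[0] ++ List.replicate (2*k) 1, by simp⟩
  -- decompose ν
  obtain ⟨t, ht⟩ := hpre
  have htne : t ≠ [] := by rintro rfl; simp at ht; exact hne ht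
  rcases t with _ | ⟨x, rest⟩
  · exact absurd rfl htne
  have hkey : e (η ++ [j]) ++ [0] <+: e ν := by
    apply key ν (η ++ [j]) x
    rw [← ht]
    exact ⟨rest, by simp⟩
  obtain ⟨w, hw⟩ := hkey
  -- rewrite both sides
  have hA : f (η ++ [i]) = (e η ++ [0]) ++ List.replicate (2*i+1) 1 := by
    rw [hf, he]
    simp [List.replicate_succ']
  have hB : f ν = (e η ++ [0]) ++ (List.replicate (2*j) 1 ++ 0 :: (w ++ [1])) := by
    rw [hf, ← hw, he]
    simp
  rw [hA, hB]
  constructor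
  · rw [List.prefix_append_right_inj]
    intro hpref
    have hlen : 2*j < (List.replicate (2*i+1) (1 : Fin 2)).length := by
      simp; omega
    have := hpref.getElem hlen
    rw [List.getElem_replicate] at this
    rw [List.getElem_append_right (by simp)] at this
    simp at this
  · rw [List.prefix_append_right_inj]
    intro hpref
    have hmem : (0 : Fin 2) ∈ List.replicate (2*j) (1 : Fin 2) ++ 0 :: (w ++ [1]) := by simp
    have := List.eq_of_mem_replicate (hpref.subset hmem)
    simp at this
end

section
/- Define e : List ℕ → List (Fin 2) by e([]) = [] and e(η ++ [i]) = e(η) ++ [0] ++ (replicate (2*i) 1), and define f(η) = e(η) ++ [1]. Let η be a list, i, j natural numbers with j > i, and ν a list having η ++ [j] as a (not necessarily strict) prefix. Then f(η ++ [i]) is a prefix of f(ν). -/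
theorem stmt_4 (e : List ℕ → List (Fin 2))
    (he0 : e [] = [])
    (he : ∀ (η : List ℕ) (i : ℕ), e (η ++ [i]) = e η ++ [0] ++ List.replicate (2 * i) 1)
    (f : List ℕ → List (Fin 2))
    (hf : ∀ η : List ℕ, f η = e η ++ [1])
    (η : List ℕ) (i j : ℕ) (hij : i < j) (ν : List ℕ)
    (hpre : η ++ [j] <+: ν) :
    f (η ++ [i]) <+: f ν := by
  have emono : ∀ (ν ρ : List ℕ), ρ <+: ν → e ρ <+: e ν := by
    intro ν
    induction ν using List.reverseRecOn with
    | nil => intro ρ h; rw [List.prefix_nil] at h; subst h; exact List.prefix_refl _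
    | append_singleton ν' k ih =>
      intro ρ h
      rcases List.prefix_concat_iff.mp h with h1 | h1
      · rw [h1]
      · calc e ρ <+: e ν' := ih ρ h1
          _ <+: e (ν' ++ [k]) := by rw [he]; simp [List.prefix_append]
  -- step 1: f (η ++ [i]) <+: e (η ++ [j])
  have h1 : f (η ++ [i]) <+: e (η ++ [j]) := by
    rw [hf, he, he]
    have : List.replicate (2 * i) (1 : Fin 2) ++ [1] <+: List.replicate (2 * j) 1 := by
      have : List.replicate (2 * i) (1 : Fin 2) ++ [1] = List.replicate (2 * i + 1) 1 := by
        simp [List.replicate_succ']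
      rw [this]
      exact ⟨List.replicate (2 * j - (2 * i + 1)) 1, by
        rw [← List.replicate_add]; congr 1; omega⟩
    obtain ⟨t, ht⟩ := this
    exact ⟨t, by rw [← ht]; simp⟩
  have h2 : e (η ++ [j]) <+: e ν := emono ν _ hpre
  have h3 : e ν <+: f ν := by rw [hf]; exact List.prefix_append _ _
  exact h1.trans (h2.trans h3)
end

section
/- Call a sequence (λ_n) of nonempty lists over ℕ a left-leaning path if for every n, writing λ_n = η ++ [i], there exists j ≤ i such that η ++ [j] is a strict prefix of λ_{n+1}. Call (ρ_n) a right-veering path if for every n, writing ρ_n = η ++ [i], there exists j > i such that η ++ [j] is a prefix of ρ_{n+1}. With f as above (f(η) = e(η) ++ [1], where e([]) = [], e(η ++ [i]) = e(η) ++ [0] ++ replicate (2i) 1), prove: (a) if (λ_n) is a left-leaning path then the lists f(λ_n) are pairwise incomparable in the prefix order; (b) if (ρ_n) is a right-veering path then the lists f(ρ_n) are pairwise comparable in the prefix order. -/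
/-- A left-leaning path in `ω^{<ω}` with the root removed: each term is a nonempty
list `η ++ [i]`, and the next term has `η ++ [j]` as a strict prefix for some `j ≤ i`. -/
def LeftLeaningPath (l : ℕ → List ℕ) : Prop :=
  ∀ n, ∃ (η : List ℕ) (i j : ℕ), l n = η ++ [i] ∧ j ≤ i ∧
    (η ++ [j] <+: l (n + 1) ∧ η ++ [j] ≠ l (n + 1))

/-- A right-veering path: each term is `η ++ [i]`, and the next term has `η ++ [j]`
as a prefix for some `j > i`. -/
def RightVeeringPath (l : ℕ → List ℕ) : Prop :=
  ∀ n, ∃ (η : List ℕ) (i j : ℕ), l n = η ++ [i] ∧ i < j ∧ η ++ [j] <+: l (n + 1)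

/-- `a` branches strictly to the left of `b`. -/
def SL (a b : List (Fin 2)) : Prop :=
  ∃ p : List (Fin 2), p ++ [0] <+: a ∧ p ++ [1] <+: b

lemma drop_last_pref {s t : List (Fin 2)} {v : Fin 2} (h : s <+: t ++ [v])
    (hl : s.length ≤ t.length) : s <+: t :=
  List.prefix_of_prefix_length_le h (List.prefix_append t [v]) hl

lemma SL.trans {a b c : List (Fin 2)} (h1 : SL a b) (h2 : SL b c) : SL a c := by
  obtain ⟨p, hp0, hp1⟩ := h1
  obtain ⟨q, hq0, hq1⟩ := h2
  rcases lt_trichotomy p.length q.length with h | h | h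
  · refine ⟨p, hp0, ?_⟩
    have h3 : p ++ [1] <+: q ++ [0] :=
      List.prefix_of_prefix_length_le hp1 hq0 (by simp; omega)
    have h4 : p ++ [1] <+: q := drop_last_pref h3 (by simp; omega)
    exact (h4.trans (List.prefix_append q [1])).trans hq1
  · exfalso
    have h3 : p ++ [1] = q ++ [0] :=
      (List.prefix_of_prefix_length_le hp1 hq0 (by simp [h])).eq_of_length (by simp [h])
    have := (List.append_inj' h3 rfl).2
    simp at this
  · refine ⟨q, ?_, hq1⟩
    have h3 : q ++ [0] <+: p ++ [1] :=
      List.prefix_of_prefix_length_le hq0 hp1 (by simp; omega)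
    have h4 : q ++ [0] <+: p := drop_last_pref h3 (by simp; omega)
    exact (h4.trans (List.prefix_append p [0])).trans hp0

lemma SL.not_prefix {a b : List (Fin 2)} (h : SL a b) : ¬ a <+: b ∧ ¬ b <+: a := by
  obtain ⟨p, hp0, hp1⟩ := h
  constructor
  · intro hab
    have h3 : p ++ [0] = p ++ [1] :=
      (List.prefix_of_prefix_length_le (hp0.trans hab) hp1 (by simp)).eq_of_length (by simp)
    simp at h3
  · intro hba
    have h3 : p ++ [0] = p ++ [1] :=
      (List.prefix_of_prefix_length_le hp0 (hp1.trans hba) (by simp)).eq_of_length (by simp)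
    simp at h3

lemma pref_one (s : List (Fin 2)) (d : ℕ) :
    s ++ [1] <+: s ++ (List.replicate d 1 ++ [1]) := by
  cases d with
  | zero => simp
  | succ d => exact ⟨List.replicate d 1 ++ [1], by simp [List.replicate_succ]⟩

lemma rep_key (s : List (Fin 2)) (j' d : ℕ) :
    s ++ List.replicate j' 1 ++ [1] <+: s ++ List.replicate (j' + d) 1 ++ [1] := by
  cases d with
  | zero => simp
  | succ d =>
    refine ⟨List.replicate d 1 ++ [1], ?_⟩
    have h : j' + (d + 1) = (j' + 1) + d := by omega
    rw [h, List.replicate_add, List.replicate_add, List.replicate_one]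
    simp [List.append_assoc]

lemma emono (e : List ℕ → List (Fin 2)) (_he0 : e [] = [])
    (he : ∀ (η : List ℕ) (i : ℕ), e (η ++ [i]) = e η ++ [0] ++ List.replicate (2 * i) 1) :
    ∀ ν μ : List ℕ, μ <+: ν → e μ <+: e ν := by
  intro ν
  induction ν using List.reverseRecOn with
  | nil => intro μ h; rw [List.prefix_nil.mp h]
  | append_singleton ν' k ih =>
    intro μ h
    by_cases hμ : μ = ν' ++ [k]
    · rw [hμ]
    · have hl0 := h.length_le
      simp only [List.length_append, List.length_singleton] at hl0
      have hlen : μ.length ≤ ν'.length := by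
        rcases Nat.lt_or_ge μ.length (ν'.length + 1) with h2 | h2
        · omega
        · exact absurd (h.eq_of_length (by simp; omega)) hμ
      have h3 : μ <+: ν' := List.prefix_of_prefix_length_le h (List.prefix_append ν' [k]) hlen
      refine (ih μ h3).trans ?_
      rw [he]
      exact (List.prefix_append _ _).trans (List.prefix_append _ _)

lemma eproper (e : List ℕ → List (Fin 2)) (he0 : e [] = [])
    (he : ∀ (η : List ℕ) (i : ℕ), e (η ++ [i]) = e η ++ [0] ++ List.replicate (2 * i) 1)
    {μ ν : List ℕ} (h : μ <+: ν) (hne : μ ≠ ν) : e μ ++ [0] <+: e ν := by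
  obtain ⟨τ, hτ⟩ := h
  cases τ with
  | nil => simp at hτ; exact absurd hτ hne
  | cons k τ' =>
    have h1 : μ ++ [k] <+: ν := ⟨τ', by rw [← hτ]; simp⟩
    have h2 := emono e he0 he ν (μ ++ [k]) h1
    rw [he] at h2
    exact ((List.prefix_append _ _).trans h2 : e μ ++ [0] <+: e ν)

theorem stmt_5 (e : List ℕ → List (Fin 2))
    (he0 : e [] = [])
    (he : ∀ (η : List ℕ) (i : ℕ), e (η ++ [i]) = e η ++ [0] ++ List.replicate (2 * i) 1)
    (f : List ℕ → List (Fin 2))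
    (hf : ∀ η : List ℕ, f η = e η ++ [1]) :
    (∀ l : ℕ → List ℕ, LeftLeaningPath l →
      ∀ m n, m ≠ n → ¬ (f (l m) <+: f (l n)) ∧ ¬ (f (l n) <+: f (l m))) ∧
    (∀ l : ℕ → List ℕ, RightVeeringPath l →
      ∀ m n, f (l m) <+: f (l n) ∨ f (l n) <+: f (l m)) := by
  constructor
  · intro l hl
    have step : ∀ n, SL (f (l (n + 1))) (f (l n)) := by
      intro n
      obtain ⟨η, i, j, hln, hji, hpre, hne⟩ := hl n
      refine ⟨e η ++ [0] ++ List.replicate (2 * j) 1, ?_, ?_⟩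
      · have h1 : e (η ++ [j]) ++ [0] <+: e (l (n + 1)) := eproper e he0 he hpre hne
        rw [he] at h1
        refine h1.trans ?_
        rw [hf]
        exact List.prefix_append _ _
      · rw [hln, hf, he]
        have h2 : 2 * i = 2 * j + (2 * i - 2 * j) := by omega
        rw [h2]
        exact rep_key (e η ++ [0]) (2 * j) (2 * i - 2 * j)
    have chain : ∀ m k, SL (f (l (m + k + 1))) (f (l m)) := by
      intro m k
      induction k with
      | zero => exact step m
      | succ k ih => exact (step (m + k + 1)).trans ih
    intro m n hmn
    rcases lt_trichotomy m n with h | h | h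
    · have h1 := chain m (n - m - 1)
      have h2 : m + (n - m - 1) + 1 = n := by omega
      rw [h2] at h1
      exact ⟨h1.not_prefix.2, h1.not_prefix.1⟩
    · exact absurd h hmn
    · have h1 := chain n (m - n - 1)
      have h2 : n + (m - n - 1) + 1 = m := by omega
      rw [h2] at h1
      exact h1.not_prefix
  · intro l hl
    have step : ∀ n, f (l n) <+: f (l (n + 1)) := by
      intro n
      obtain ⟨η, i, j, hln, hij, hpre⟩ := hl n
      have h1 : e (η ++ [j]) <+: e (l (n + 1)) := emono e he0 he _ _ hpre
      rw [he] at h1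
      have h2 : f (l n) <+: e η ++ [0] ++ List.replicate (2 * j) 1 := by
        rw [hln, hf, he]
        have hrep : List.replicate (2 * j) (1 : Fin 2) =
            (List.replicate (2 * i) 1 ++ [1]) ++ List.replicate (2 * j - 2 * i - 1) 1 := by
          rw [← List.replicate_one (a := (1 : Fin 2)), ← List.replicate_add,
            ← List.replicate_add]
          congr 1; omega
        rw [hrep]
        exact ⟨List.replicate (2 * j - 2 * i - 1) 1, by simp [List.append_assoc]⟩
      refine h2.trans (h1.trans ?_)
      rw [hf]
      exact List.prefix_append _ _
    have chain : ∀ m k, f (l m) <+: f (l (m + k)) := by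
      intro m k
      induction k with
      | zero => exact List.prefix_refl _
      | succ k ih => exact ih.trans (step (m + k))
    intro m n
    rcases le_total m n with h | h
    · left
      have h1 := chain m (n - m)
      rwa [show m + (n - m) = n by omega] at h1
    · right
      have h1 := chain n (m - n)
      rwa [show n + (m - n) = m by omega] at h1
end

section
/- Let K be a field, V a vector space over K, and k a natural number. Let U be a subspace of V with finite dimension k, C a subspace of V, and W : Fin (k+1) → Submodule K V a family of subspaces such that for every j, W j ⊓ (⨆_{i < j} W i) ≤ C. Then it is not the case that for every j ≤ k there exists a vector v_j ∈ (U ⊓ W j) with v_j ∉ C. -/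
theorem stmt_8 {K V : Type*} [Field K] [AddCommGroup V] [Module K V]
    (k : ℕ) (U : Submodule K V) [FiniteDimensional K U]
    (hU : Module.finrank K U = k)
    (C : Submodule K V) (W : Fin (k + 1) → Submodule K V)
    (hW : ∀ j : Fin (k + 1), W j ⊓ (⨆ i : Fin (k + 1), ⨆ _ : i < j, W i) ≤ C) :
    ¬ ∀ j : Fin (k + 1), ∃ v : V, v ∈ U ⊓ W j ∧ v ∉ C := by
  classical
  intro h
  choose v hv hvC using h
  set u : Fin (k + 1) → U := fun j => ⟨v j, (hv j).1⟩ with hu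
  have hnli : ¬ LinearIndependent K u := by
    intro hli
    have := hli.fintype_card_le_finrank
    rw [Fintype.card_fin, hU] at this
    omega
  rw [Fintype.not_linearIndependent_iff] at hnli
  obtain ⟨g, hg0, i0, hi0⟩ := hnli
  let s := Finset.univ.filter (fun i => g i ≠ 0)
  have hs : s.Nonempty := ⟨i0, by simp [s, hi0]⟩
  let j := s.max' hs
  have hgj : g j ≠ 0 := (Finset.mem_filter.mp (s.max'_mem hs)).2
  have hmax : ∀ i, j < i → g i = 0 := by
    intro i hi
    by_contra hne
    exact absurd (s.le_max' i (by simp [s, hne])) (not_le.mpr hi)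
  have hV : ∑ i, g i • v i = 0 := by
    have := congrArg (Submodule.subtype U) hg0
    simpa [map_sum, u] using this
  have h1 : ∑ i, g i • v i = ∑ i ∈ Finset.univ.filter (· ≤ j), g i • v i := by
    refine (Finset.sum_subset (Finset.filter_subset _ _) ?_).symm
    intro i _ hi
    have : j < i := by
      simp only [Finset.mem_filter, Finset.mem_univ, true_and, not_le] at hi
      exact hi
    rw [hmax i this, zero_smul]
  have h2 : Finset.univ.filter (· ≤ j) = insert j (Finset.univ.filter (· < j)) := by
    ext i
    simp [le_iff_lt_or_eq, or_comm, eq_comm]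
  have h3 : g j • v j + ∑ i ∈ Finset.univ.filter (· < j), g i • v i = 0 := by
    have h4 := hV
    rw [h1, h2, Finset.sum_insert (by simp)] at h4
    exact h4
  have hvj : v j = (g j)⁻¹ • ∑ i ∈ Finset.univ.filter (· < j), (-g i) • v i := by
    rw [eq_inv_smul_iff₀ hgj]
    have h5 : ∑ i ∈ Finset.univ.filter (· < j), (-g i) • v i
        = -∑ i ∈ Finset.univ.filter (· < j), g i • v i := by
      simp [neg_smul]
    rw [h5]
    exact eq_neg_of_add_eq_zero_left h3
  have hmem : v j ∈ ⨆ i : Fin (k + 1), ⨆ _ : i < j, W i := by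
    rw [hvj]
    refine Submodule.smul_mem _ _ (Submodule.sum_mem _ ?_)
    intro i hi
    have hij : i < j := (Finset.mem_filter.mp hi).2
    exact Submodule.smul_mem _ _
      (Submodule.mem_iSup_of_mem i (Submodule.mem_iSup_of_mem hij (hv i).2))
  exact hvC j (hW j ⟨(hv j).2, hmem⟩)
end

section
/- Let C be a set, and let A, B be sets disjoint from each other and from C. Suppose ≤₁ is a linear order on A ∪ C and ≤₂ is a linear order on B ∪ C which agree on C. Then there exists a linear order ≤ on A ∪ B ∪ C extending both ≤₁ and ≤₂. -/
/-- `r` is a linear order on the set `S`: transitive, antisymmetric and total on `S`. -/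
def IsLinearOn {α : Type*} (r : α → α → Prop) (S : Set α) : Prop :=
  (∀ x ∈ S, ∀ y ∈ S, ∀ z ∈ S, r x y → r y z → r x z) ∧
  (∀ x ∈ S, ∀ y ∈ S, r x y → r y x → x = y) ∧
  (∀ x ∈ S, ∀ y ∈ S, r x y ∨ r y x)

theorem stmt_14 {α : Type*} (A B C : Set α)
    (hAB : Disjoint A B) (hAC : Disjoint A C) (hBC : Disjoint B C)
    (r₁ r₂ : α → α → Prop)
    (h₁ : IsLinearOn r₁ (A ∪ C)) (h₂ : IsLinearOn r₂ (B ∪ C))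
    (hagree : ∀ x ∈ C, ∀ y ∈ C, r₁ x y ↔ r₂ x y) :
    ∃ r : α → α → Prop, IsLinearOn r (A ∪ B ∪ C) ∧
      (∀ x ∈ A ∪ C, ∀ y ∈ A ∪ C, r x y ↔ r₁ x y) ∧
      (∀ x ∈ B ∪ C, ∀ y ∈ B ∪ C, r x y ↔ r₂ x y) := by
  classical
  obtain ⟨t₁, a₁, tot₁⟩ := h₁
  obtain ⟨t₂, a₂, tot₂⟩ := h₂
  have hAnB : ∀ x ∈ A, x ∉ B := fun x hx => Set.disjoint_left.mp hAB hx
  have hAnC : ∀ x ∈ A, x ∉ C := fun x hx => Set.disjoint_left.mp hAC hx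
  have hBnC : ∀ x ∈ B, x ∉ C := fun x hx => Set.disjoint_left.mp hBC hx
  have hmid : ∀ x, x ∈ A ∪ C → x ∈ B ∪ C → x ∈ C := by
    rintro x (hx | hx) hx'
    · rcases hx' with h | h
      · exact absurd h (hAnB x hx)
      · exact absurd h (hAnC x hx)
    · exact hx
  refine ⟨fun x y =>
    (x ∈ A ∪ C ∧ y ∈ A ∪ C ∧ r₁ x y) ∨
    (x ∈ B ∪ C ∧ y ∈ B ∪ C ∧ r₂ x y) ∨
    (x ∈ A ∧ y ∈ B ∧ ∃ c ∈ C, r₁ x c ∧ r₂ c y) ∨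
    (x ∈ B ∧ y ∈ A ∧ ¬ ∃ c ∈ C, r₁ y c ∧ r₂ c x), ⟨?_, ?_, ?_⟩, ?_, ?_⟩
  · -- transitivity
    rintro x hx y hy z hz hxy hyz
    rcases hxy with ⟨hx1, hy1, hxy⟩ | ⟨hx1, hy1, hxy⟩ | ⟨hx1, hy1, hxy⟩ | ⟨hx1, hy1, hxy⟩ <;>
      rcases hyz with ⟨hy2, hz2, hyz⟩ | ⟨hy2, hz2, hyz⟩ | ⟨hy2, hz2, hyz⟩ | ⟨hy2, hz2, hyz⟩
    · -- 1,1
      exact Or.inl ⟨hx1, hz2, t₁ x hx1 y hy1 z hz2 hxy hyz⟩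
    · -- 1,2
      have hyC := hmid y hy1 hy2
      rcases hz2 with hzB | hzC
      · rcases hx1 with hxA | hxC
        · exact Or.inr (Or.inr (Or.inl ⟨hxA, hzB, y, hyC, hxy, hyz⟩))
        · have h' : r₂ x y := (hagree x hxC y hyC).mp hxy
          exact Or.inr (Or.inl ⟨Or.inr hxC, Or.inl hzB,
            t₂ x (Or.inr hxC) y hy2 z (Or.inl hzB) h' hyz⟩)
      · have h' : r₁ y z := (hagree y hyC z hzC).mpr hyz
        exact Or.inl ⟨hx1, Or.inr hzC, t₁ x hx1 y hy1 z (Or.inr hzC) hxy h'⟩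
    · -- 1,3
      obtain ⟨c, hc, hyc, hcz⟩ := hyz
      have hxc : r₁ x c := t₁ x hx1 y hy1 c (Or.inr hc) hxy hyc
      rcases hx1 with hxA | hxC
      · exact Or.inr (Or.inr (Or.inl ⟨hxA, hz2, c, hc, hxc, hcz⟩))
      · have h' : r₂ x c := (hagree x hxC c hc).mp hxc
        exact Or.inr (Or.inl ⟨Or.inr hxC, Or.inl hz2,
          t₂ x (Or.inr hxC) c (Or.inr hc) z (Or.inl hz2) h' hcz⟩)
    · -- 1,4
      exact absurd (hmid y hy1 (Or.inl hy2)) (hBnC y hy2)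
    · -- 2,1
      have hyC := hmid y hy2 hy1
      rcases hz2 with hzA | hzC
      · rcases hx1 with hxB | hxC
        · refine Or.inr (Or.inr (Or.inr ⟨hxB, hzA, fun ⟨c, hc, hzc, hcx⟩ => ?_⟩))
          have hcy : r₂ c y := t₂ c (Or.inr hc) x (Or.inl hxB) y hy1 hcx hxy
          have hcy₁ : r₁ c y := (hagree c hc y hyC).mpr hcy
          have hzy : r₁ z y := t₁ z (Or.inl hzA) c (Or.inr hc) y hy2 hzc hcy₁
          have := a₁ y hy2 z (Or.inl hzA) hyz hzy
          exact hAnC z hzA (this ▸ hyC)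
        · have h' : r₁ x y := (hagree x hxC y hyC).mpr hxy
          exact Or.inl ⟨Or.inr hxC, Or.inl hzA,
            t₁ x (Or.inr hxC) y hy2 z (Or.inl hzA) h' hyz⟩
      · have h' : r₂ y z := (hagree y hyC z hzC).mp hyz
        exact Or.inr (Or.inl ⟨hx1, Or.inr hzC, t₂ x hx1 y hy1 z (Or.inr hzC) hxy h'⟩)
    · -- 2,2
      exact Or.inr (Or.inl ⟨hx1, hz2, t₂ x hx1 y hy1 z hz2 hxy hyz⟩)
    · -- 2,3
      exact absurd (hmid y (Or.inl hy2) hy1) (hAnC y hy2)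
    · -- 2,4
      rcases hx1 with hxB | hxC
      · refine Or.inr (Or.inr (Or.inr ⟨hxB, hz2, fun ⟨c, hc, hzc, hcx⟩ => ?_⟩))
        exact hyz ⟨c, hc, hzc, t₂ c (Or.inr hc) x (Or.inl hxB) y (Or.inl hy2) hcx hxy⟩
      · rcases tot₁ x (Or.inr hxC) z (Or.inl hz2) with h | h
        · exact Or.inl ⟨Or.inr hxC, Or.inl hz2, h⟩
        · exact absurd ⟨x, hxC, h, hxy⟩ hyz
    · -- 3,1
      exact absurd (hmid y hy2 (Or.inl hy1)) (hBnC y hy1)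
    · -- 3,2
      obtain ⟨c, hc, hxc, hcy⟩ := hxy
      have hcz : r₂ c z := t₂ c (Or.inr hc) y hy2 z hz2 hcy hyz
      rcases hz2 with hzB | hzC
      · exact Or.inr (Or.inr (Or.inl ⟨hx1, hzB, c, hc, hxc, hcz⟩))
      · have h' : r₁ c z := (hagree c hc z hzC).mpr hcz
        exact Or.inl ⟨Or.inl hx1, Or.inr hzC,
          t₁ x (Or.inl hx1) c (Or.inr hc) z (Or.inr hzC) hxc h'⟩
    · -- 3,3
      exact absurd hy1 (hAnB y hy2)
    · -- 3,4
      obtain ⟨c, hc, hxc, hcy⟩ := hxy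
      rcases tot₁ x (Or.inl hx1) z (Or.inl hz2) with h | h
      · exact Or.inl ⟨Or.inl hx1, Or.inl hz2, h⟩
      · exact absurd ⟨c, hc, t₁ z (Or.inl hz2) x (Or.inl hx1) c (Or.inr hc) h hxc, hcy⟩ hyz
    · -- 4,1
      rcases hz2 with hzA | hzC
      · refine Or.inr (Or.inr (Or.inr ⟨hx1, hzA, fun ⟨c, hc, hzc, hcx⟩ => ?_⟩))
        exact hxy ⟨c, hc, t₁ y hy2 z (Or.inl hzA) c (Or.inr hc) hyz hzc, hcx⟩
      · rcases tot₂ x (Or.inl hx1) z (Or.inr hzC) with h | h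
        · exact Or.inr (Or.inl ⟨Or.inl hx1, Or.inr hzC, h⟩)
        · exact absurd ⟨z, hzC, hyz, h⟩ hxy
    · -- 4,2
      exact absurd (hmid y (Or.inl hy1) hy2) (hAnC y hy1)
    · -- 4,3
      obtain ⟨c, hc, hyc, hcz⟩ := hyz
      rcases tot₂ x (Or.inl hx1) z (Or.inl hz2) with h | h
      · exact Or.inr (Or.inl ⟨Or.inl hx1, Or.inl hz2, h⟩)
      · exact absurd ⟨c, hc, hyc, t₂ c (Or.inr hc) z (Or.inl hz2) x (Or.inl hx1) hcz h⟩ hxy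
    · -- 4,4
      exact absurd hy2 (hAnB y hy1)
  · -- antisymmetry
    rintro x hx y hy hxy hyx
    rcases hxy with ⟨hx1, hy1, hxy⟩ | ⟨hx1, hy1, hxy⟩ | ⟨hx1, hy1, hxy⟩ | ⟨hx1, hy1, hxy⟩ <;>
      rcases hyx with ⟨hy2, hx2, hyx⟩ | ⟨hy2, hx2, hyx⟩ | ⟨hy2, hx2, hyx⟩ | ⟨hy2, hx2, hyx⟩
    · exact a₁ x hx1 y hy1 hxy hyx
    · have hxC := hmid x hx1 hx2
      have hyC := hmid y hy1 hy2
      exact a₁ x hx1 y hy1 hxy ((hagree y hyC x hxC).mpr hyx)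
    · exact absurd (hmid x hx1 (Or.inl hx2)) (hBnC x hx2)
    · exact absurd (hmid y hy1 (Or.inl hy2)) (hBnC y hy2)
    · have hxC := hmid x hx2 hx1
      have hyC := hmid y hy2 hy1
      exact a₂ x hx1 y hy1 hxy ((hagree y hyC x hxC).mp hyx)
    · exact a₂ x hx1 y hy1 hxy hyx
    · exact absurd (hmid y (Or.inl hy2) hy1) (hAnC y hy2)
    · exact absurd (hmid x (Or.inl hx2) hx1) (hAnC x hx2)
    · exact absurd (hmid y hy2 (Or.inl hy1)) (hBnC y hy1)
    · exact absurd (hmid x (Or.inl hx1) hx2) (hAnC x hx1)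
    · exact absurd hx2 (hAnB x hx1)
    · exact absurd hxy hyx
    · exact absurd (hmid x hx2 (Or.inl hx1)) (hBnC x hx1)
    · exact absurd (hmid y (Or.inl hy1) hy2) (hAnC y hy1)
    · exact absurd hyx hxy
    · exact absurd hx1 (hAnB x hx2)
  · -- totality
    rintro x hx y hy
    rcases hx with (hxA | hxB) | hxC <;> rcases hy with (hyA | hyB) | hyC
    · rcases tot₁ x (Or.inl hxA) y (Or.inl hyA) with h | h
      · exact Or.inl (Or.inl ⟨Or.inl hxA, Or.inl hyA, h⟩)
      · exact Or.inr (Or.inl ⟨Or.inl hyA, Or.inl hxA, h⟩)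
    · by_cases h : ∃ c ∈ C, r₁ x c ∧ r₂ c y
      · exact Or.inl (Or.inr (Or.inr (Or.inl ⟨hxA, hyB, h⟩)))
      · exact Or.inr (Or.inr (Or.inr (Or.inr ⟨hyB, hxA, h⟩)))
    · rcases tot₁ x (Or.inl hxA) y (Or.inr hyC) with h | h
      · exact Or.inl (Or.inl ⟨Or.inl hxA, Or.inr hyC, h⟩)
      · exact Or.inr (Or.inl ⟨Or.inr hyC, Or.inl hxA, h⟩)
    · by_cases h : ∃ c ∈ C, r₁ y c ∧ r₂ c x
      · exact Or.inr (Or.inr (Or.inr (Or.inl ⟨hyA, hxB, h⟩)))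
      · exact Or.inl (Or.inr (Or.inr (Or.inr ⟨hxB, hyA, h⟩)))
    · rcases tot₂ x (Or.inl hxB) y (Or.inl hyB) with h | h
      · exact Or.inl (Or.inr (Or.inl ⟨Or.inl hxB, Or.inl hyB, h⟩))
      · exact Or.inr (Or.inr (Or.inl ⟨Or.inl hyB, Or.inl hxB, h⟩))
    · rcases tot₂ x (Or.inl hxB) y (Or.inr hyC) with h | h
      · exact Or.inl (Or.inr (Or.inl ⟨Or.inl hxB, Or.inr hyC, h⟩))
      · exact Or.inr (Or.inr (Or.inl ⟨Or.inr hyC, Or.inl hxB, h⟩))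
    · rcases tot₁ x (Or.inr hxC) y (Or.inl hyA) with h | h
      · exact Or.inl (Or.inl ⟨Or.inr hxC, Or.inl hyA, h⟩)
      · exact Or.inr (Or.inl ⟨Or.inl hyA, Or.inr hxC, h⟩)
    · rcases tot₂ x (Or.inr hxC) y (Or.inl hyB) with h | h
      · exact Or.inl (Or.inr (Or.inl ⟨Or.inr hxC, Or.inl hyB, h⟩))
      · exact Or.inr (Or.inr (Or.inl ⟨Or.inl hyB, Or.inr hxC, h⟩))
    · rcases tot₁ x (Or.inr hxC) y (Or.inr hyC) with h | h
      · exact Or.inl (Or.inl ⟨Or.inr hxC, Or.inr hyC, h⟩)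
      · exact Or.inr (Or.inl ⟨Or.inr hyC, Or.inr hxC, h⟩)
  · -- extends r₁
    intro x hx y hy
    constructor
    · rintro (⟨_, _, h⟩ | ⟨hx2, hy2, h⟩ | ⟨hx3, hy3, _⟩ | ⟨hx4, hy4, _⟩)
      · exact h
      · exact (hagree x (hmid x hx hx2) y (hmid y hy hy2)).mpr h
      · exact absurd (hmid y hy (Or.inl hy3)) (hBnC y hy3)
      · exact absurd (hmid x hx (Or.inl hx4)) (hBnC x hx4)
    · exact fun h => Or.inl ⟨hx, hy, h⟩
  · -- extends r₂
    intro x hx y hy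
    constructor
    · rintro (⟨hx2, hy2, h⟩ | ⟨_, _, h⟩ | ⟨hx3, hy3, _⟩ | ⟨hx4, hy4, _⟩)
      · exact (hagree x (hmid x hx2 hx) y (hmid y hy2 hy)).mp h
      · exact h
      · exact absurd (hmid x (Or.inl hx3) hx) (hAnC x hx3)
      · exact absurd (hmid y (Or.inl hy4) hy) (hAnC y hy4)
    · exact fun h => Or.inr (Or.inl ⟨hx, hy, h⟩)
end

section
/- Let G be a group acting on types α and β, and let φ, ψ be functions assigning to parameters in β (respectively in a type γ on which G also acts) subsets of α, which are equivariant: φ(g • b) = g • φ(b) (the image of φ(b) under the action of g on α), and similarly for ψ. Suppose there exist b₀, …, b_{k-1} in the G-orbit of b such that ⋂_{i<k} φ(b_i) ⊆ ψ(c), and there exist c₀, …, c_{n-1} in the G-orbit of c such that ⋂_{j<n} ψ(c_j) = ∅. Then there exist finitely many elements b'₀, …, b'_{m-1} in the G-orbit of b such that ⋂_{l<m} φ(b'_l) = ∅. -/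
open Pointwise

theorem stmt_15 {G α β γ : Type*} [Group G]
    [MulAction G α] [MulAction G β] [MulAction G γ]
    (φ : β → Set α) (ψ : γ → Set α)
    (hφ : ∀ (g : G) (b : β), φ (g • b) = g • φ b)
    (hψ : ∀ (g : G) (c : γ), ψ (g • c) = g • ψ c)
    (b : β) (c : γ) (k n : ℕ)
    (bs : Fin k → β) (hbs : ∀ i, bs i ∈ MulAction.orbit G b)
    (hent : (⋂ i : Fin k, φ (bs i)) ⊆ ψ c)
    (cs : Fin n → γ) (hcs : ∀ j, cs j ∈ MulAction.orbit G c)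
    (hdiv : (⋂ j : Fin n, ψ (cs j)) = ∅) :
    ∃ (m : ℕ) (bs' : Fin m → β), (∀ l, bs' l ∈ MulAction.orbit G b) ∧
      (⋂ l : Fin m, φ (bs' l)) = ∅ := by
  -- choose group elements g j with g j • c = cs j
  choose g hg using fun j => hcs j
  refine ⟨n * k, fun l => g (finProdFinEquiv.symm l).1 • bs (finProdFinEquiv.symm l).2,
    ?_, ?_⟩
  · intro l
    obtain ⟨h, hh⟩ := hbs (finProdFinEquiv.symm l).2
    exact ⟨g (finProdFinEquiv.symm l).1 * h, by dsimp only at hh ⊢; rw [mul_smul, hh]⟩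
  · rw [Set.eq_empty_iff_forall_notMem] at hdiv ⊢
    intro x hx
    apply hdiv x
    simp only [Set.mem_iInter] at hx ⊢
    intro j
    rw [← hg j, hψ]
    have : x ∈ ⋂ i : Fin k, φ (g j • bs i) := Set.mem_iInter.2 fun i => by
      have := hx (finProdFinEquiv (j, i))
      simpa using this
    have h2 : (⋂ i : Fin k, φ (g j • bs i)) = g j • ⋂ i : Fin k, φ (bs i) := by
      simp_rw [hφ, Set.smul_set_iInter]
    rw [h2] at this
    exact Set.smul_set_mono hent this
end
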